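/- arXiv:2304.03765 — 4 statements merged into one kernel-verified Lean document; each statement's English description precedes it below -/
import Mathlib

section
/- Let S and A be nonempty finite sets, let p be a transition kernel, let λ ∈ (0,1), and for each (s,a) ∈ S×A let c_{s,a} : ℝ^n → ℝ be a concave function. For a decision rule d : S → A let h_d(x) ∈ ℝ^S have entries h_d(x)(s) = c_{s,d(s)}(x), and let v_d(x) = (I − λP_d)^{-1} h_d(x). Then for every state s ∈ S, the function x ↦ min_{d : S → A} (v_d(x))(s) is concave on ℝ^n. -/
/-!
For a fixed decision rule `d`, the matrix `(I - λ P_d)⁻¹` has nonnegative entries (a discrete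
minimum principle: if `(I - Q) w ≥ 0` for a nonnegative `Q` with row sums below `1`, then `w`
cannot be negative at a minimising state). Hence `x ↦ v_d(x)(s)` is a nonnegative combination of
the concave costs `c_{s',d(s')}`, so it is concave, and a minimum of finitely many concave
functions is concave.
-/

open Matrix Finset

section Concave

variable {E : Type*} [AddCommGroup E] [Module ℝ E] {s : Set E}

theorem concaveOn_mulVec_apply {m ι : Type*} [Fintype ι] {M : Matrix m ι ℝ}
    (hM : ∀ i j, 0 ≤ M i j) {f : ι → E → ℝ} (hs : Convex ℝ s) (hf : ∀ j, ConcaveOn ℝ s (f j))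
    (i : m) : ConcaveOn ℝ s (fun x => (M *ᵥ fun j => f j x) i) := by
  have hsum : (fun x => (M *ᵥ fun j => f j x) i) = ∑ j, M i j • f j := by
    ext x
    simp [mulVec, dotProduct, Finset.sum_apply]
  rw [hsum]
  exact Finset.sum_induction _ (ConcaveOn ℝ s) (fun _ _ => ConcaveOn.add)
    (concaveOn_const 0 hs) fun j _ => (hf j).smul (hM i j)

theorem concaveOn_ciInf {ι : Type*} [Finite ι] [Nonempty ι] {f : ι → E → ℝ}
    (hf : ∀ i, ConcaveOn ℝ s (f i)) : ConcaveOn ℝ s (fun x => ⨅ i, f i x) := by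
  refine ⟨(hf (Classical.arbitrary ι)).1, fun x hx y hy a b ha hb hab => le_ciInf fun i => ?_⟩
  have hx_le : (⨅ j, f j x) ≤ f i x := ciInf_le (Set.finite_range _).bddBelow i
  have hy_le : (⨅ j, f j y) ≤ f i y := ciInf_le (Set.finite_range _).bddBelow i
  calc a • (⨅ j, f j x) + b • (⨅ j, f j y) ≤ a • f i x + b • f i y := by gcongr
    _ ≤ f i (a • x + b • y) := (hf i).2 hx hy ha hb hab

end Concave

namespace Matrix

variable {n : Type*} [Fintype n] [DecidableEq n] {Q : Matrix n n ℝ}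

theorem nonneg_of_one_sub_mulVec_nonneg (hQ0 : ∀ i j, 0 ≤ Q i j) (hQ1 : ∀ i, ∑ j, Q i j < 1)
    {w : n → ℝ} (hw : 0 ≤ (1 - Q) *ᵥ w) : 0 ≤ w := by
  intro i
  obtain ⟨k, -, hk⟩ := exists_min_image univ w ⟨i, mem_univ i⟩
  by_contra! hneg
  have hk_neg : w k < 0 := (hk i (mem_univ i)).trans_lt hneg
  have : ((1 - Q) *ᵥ w) k < 0 :=
    calc ((1 - Q) *ᵥ w) k = w k - ∑ j, Q k j * w j := by
          rw [sub_mulVec, one_mulVec, Pi.sub_apply]; rfl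
      _ ≤ w k - ∑ j, Q k j * w k := by
          gcongr with j
          · exact hQ0 k j
          · exact hk j (mem_univ j)
      _ = (1 - ∑ j, Q k j) * w k := by rw [← sum_mul]; ring
      _ < 0 := mul_neg_of_pos_of_neg (by linarith [hQ1 k]) hk_neg
  exact (hw k).not_gt this

theorem isUnit_det_one_sub (hQ0 : ∀ i j, 0 ≤ Q i j) (hQ1 : ∀ i, ∑ j, Q i j < 1) :
    IsUnit (1 - Q).det := by
  rw [isUnit_iff_ne_zero, Ne, ← exists_mulVec_eq_zero_iff]
  rintro ⟨v, hv, hQv⟩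
  have hv_nonneg := nonneg_of_one_sub_mulVec_nonneg hQ0 hQ1 (w := v) hQv.ge
  have hv_nonpos := nonneg_of_one_sub_mulVec_nonneg hQ0 hQ1 (w := -v)
    (by rw [mulVec_neg, hQv, neg_zero])
  exact hv (le_antisymm (neg_nonneg.1 hv_nonpos) hv_nonneg)

theorem inv_one_sub_nonneg (hQ0 : ∀ i j, 0 ≤ Q i j) (hQ1 : ∀ i, ∑ j, Q i j < 1) (i j : n) :
    0 ≤ (1 - Q)⁻¹ i j := by
  have hcol := nonneg_of_one_sub_mulVec_nonneg hQ0 hQ1 (w := (1 - Q)⁻¹ *ᵥ Pi.single j 1) (by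
    rw [mulVec_mulVec, mul_nonsing_inv _ (isUnit_det_one_sub hQ0 hQ1), one_mulVec]
    exact Pi.single_nonneg.2 zero_le_one)
  simpa using hcol i

end Matrix

theorem stmt_5_general {S A : Type*} [Fintype S] [DecidableEq S]
    [Fintype A] [Nonempty A]
    (n : ℕ)
    (p : S → A → S → ℝ)
    (hp0 : ∀ s a s', 0 ≤ p s a s')
    (hp1 : ∀ s a, ∑ s', p s a s' = 1)
    (lam : ℝ) (hlam0 : 0 < lam) (hlam1 : lam < 1)
    (c : S → A → (Fin n → ℝ) → ℝ)
    (hc : ∀ s a, ConcaveOn ℝ Set.univ (c s a))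
    (s : S) :
    ConcaveOn ℝ Set.univ (fun x : Fin n → ℝ =>
      ⨅ d : S → A,
        (((1 : Matrix S S ℝ) - lam • Matrix.of fun s₁ s₂ => p s₁ (d s₁) s₂)⁻¹).mulVec
          (fun s₁ => c s₁ (d s₁) x) s) := by
  refine concaveOn_ciInf fun d => concaveOn_mulVec_apply (fun i j => ?_) convex_univ
    (fun s₁ => hc s₁ (d s₁)) s
  refine Matrix.inv_one_sub_nonneg (fun s₁ s₂ => ?_) (fun s₁ => ?_) i j
  · exact mul_nonneg hlam0.le (hp0 _ _ _)
  · simpa [← mul_sum, hp1] using hlam1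

/-- With concave immediate costs `c_{s,a} : ℝ^n → ℝ`, for each state `s`
the optimal value `x ↦ min over decision rules d of (v_d(x))(s)` is concave in the
design variable `x`, where `v_d(x) = (I - λ P_d)⁻¹ h_d(x)` and `h_d(x)(s) = c_{s,d(s)}(x)`. -/
theorem stmt_5 {S A : Type*} [Fintype S] [Nonempty S] [DecidableEq S]
    [Fintype A] [Nonempty A]
    (n : ℕ)
    (p : S → A → S → ℝ)
    (hp0 : ∀ s a s', 0 ≤ p s a s')
    (hp1 : ∀ s a, ∑ s', p s a s' = 1)
    (lam : ℝ) (hlam0 : 0 < lam) (hlam1 : lam < 1)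
    (c : S → A → (Fin n → ℝ) → ℝ)
    (hc : ∀ s a, ConcaveOn ℝ Set.univ (c s a))
    (s : S) :
    ConcaveOn ℝ Set.univ (fun x : Fin n → ℝ =>
      ⨅ d : S → A,
        (((1 : Matrix S S ℝ) - lam • Matrix.of fun s₁ s₂ => p s₁ (d s₁) s₂)⁻¹).mulVec
          (fun s₁ => c s₁ (d s₁) x) s) :=
  stmt_5_general n p hp0 hp1 lam hlam0 hlam1 c hc s
end

section
/- Let S and A be nonempty finite sets, let p be a transition kernel, let λ ∈ (0,1), let c : S×A → ℝ, and let v* be the unique fixed point of the Bellman operator T. For each decision rule d : S → A let v_d = (I − λP_d)^{-1} h_d, where P_d(s,s') = p(s'|s,d(s)) and h_d(s) = c(s,d(s)). Then there exists a decision rule d* such that v_{d*}(s) ≤ v_d(s) for every decision rule d and every s ∈ S, and moreover v*(s) = min_{d : S → A} v_d(s) = v_{d*}(s) for every s ∈ S. -/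
/-!
For a decision rule `d`, the value `v_d = (I - λ P_d)⁻¹ h_d` is the unique solution of
`v = h_d + λ P_d v`; invertibility and comparison both come from the discrete maximum principle
`λ P w ≤ w → 0 ≤ w` for row-stochastic `P` and `0 ≤ λ < 1` (look at a minimal entry of `w`).
A rule `d*` that is greedy for `v*` makes `v*` solve `v = h_{d*} + λ P_{d*} v`, so `v* = v_{d*}`,
while for any other rule `v* ≤ h_d + λ P_d v*`, so the comparison principle gives `v* ≤ v_d`.
-/

namespace Matrix

variable {n : Type*} [Fintype n] [DecidableEq n] {P : Matrix n n ℝ} {lam : ℝ}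

theorem nonneg_of_smul_mulVec_le (hP : P ∈ rowStochastic ℝ n) (hlam0 : 0 ≤ lam)
    (hlam1 : lam < 1) {w : n → ℝ} (hw : lam • (P *ᵥ w) ≤ w) : 0 ≤ w := by
  intro s
  have : Nonempty n := ⟨s⟩
  obtain ⟨m, hm⟩ := Finite.exists_min w
  have hmin : lam * w m ≤ w m :=
    calc lam * w m = lam * ∑ j, P m j * w m := by
          rw [← Finset.sum_mul, sum_row_of_mem_rowStochastic hP, one_mul]
      _ ≤ lam * ∑ j, P m j * w j := by
          gcongr with j
          exacts [nonneg_of_mem_rowStochastic hP, hm j]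
      _ ≤ w m := hw m
  have : 0 ≤ w m := by nlinarith
  exact this.trans (hm s)

theorem one_sub_smul_mulVec (v : n → ℝ) : (1 - lam • P) *ᵥ v = v - lam • (P *ᵥ v) := by
  rw [sub_mulVec, one_mulVec, smul_mulVec]

theorem isUnit_det_one_sub_smul (hP : P ∈ rowStochastic ℝ n) (hlam0 : 0 ≤ lam)
    (hlam1 : lam < 1) : IsUnit (1 - lam • P).det := by
  rw [← isUnit_iff_isUnit_det, ← mulVec_injective_iff_isUnit]
  intro x y hxy
  have hfix : lam • (P *ᵥ (x - y)) = x - y := by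
    have hker : (1 - lam • P) *ᵥ (x - y) = 0 := by rw [mulVec_sub, hxy, sub_self]
    rwa [one_sub_smul_mulVec, sub_eq_zero, eq_comm] at hker
  have hpos := nonneg_of_smul_mulVec_le hP hlam0 hlam1 hfix.le
  have hneg := nonneg_of_smul_mulVec_le hP hlam0 hlam1 (w := y - x)
    (by rw [← neg_sub, mulVec_neg, smul_neg, hfix])
  exact le_antisymm (sub_nonneg.1 hneg) (sub_nonneg.1 hpos)

theorem inv_one_sub_smul_mulVec_eq_iff (hP : P ∈ rowStochastic ℝ n) (hlam0 : 0 ≤ lam)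
    (hlam1 : lam < 1) {h v : n → ℝ} :
    (1 - lam • P)⁻¹ *ᵥ h = v ↔ h + lam • (P *ᵥ v) = v := by
  have hdet := isUnit_det_one_sub_smul hP hlam0 hlam1
  rw [← eq_sub_iff_add_eq, ← one_sub_smul_mulVec]
  constructor
  · rintro rfl
    rw [mulVec_mulVec, mul_nonsing_inv _ hdet, one_mulVec]
  · rintro rfl
    rw [mulVec_mulVec, nonsing_inv_mul _ hdet, one_mulVec]

theorem le_inv_one_sub_smul_mulVec (hP : P ∈ rowStochastic ℝ n) (hlam0 : 0 ≤ lam)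
    (hlam1 : lam < 1) {h v : n → ℝ} (hv : v ≤ h + lam • (P *ᵥ v)) :
    v ≤ (1 - lam • P)⁻¹ *ᵥ h := by
  set u := (1 - lam • P)⁻¹ *ᵥ h
  have hu : h + lam • (P *ᵥ u) = u := (inv_one_sub_smul_mulVec_eq_iff hP hlam0 hlam1).1 rfl
  have hsuper : lam • (P *ᵥ (u - v)) ≤ u - v :=
    calc lam • (P *ᵥ (u - v)) = (h + lam • (P *ᵥ u)) - (h + lam • (P *ᵥ v)) := by
          rw [mulVec_sub, smul_sub]
          abel
      _ ≤ u - v := by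
          rw [hu]
          exact sub_le_sub_left hv u
  exact sub_nonneg.1 (nonneg_of_smul_mulVec_le hP hlam0 hlam1 hsuper)

end Matrix

theorem stmt_10_general {S A : Type*} [Fintype S] [DecidableEq S]
    [Fintype A] [Nonempty A]
    (p : S → A → S → ℝ)
    (hp0 : ∀ s a s', 0 ≤ p s a s')
    (hp1 : ∀ s a, ∑ s', p s a s' = 1)
    (lam : ℝ) (hlam0 : 0 < lam) (hlam1 : lam < 1)
    (c : S → A → ℝ)
    (vstar : S → ℝ)
    (hfix : ∀ s, vstar s = ⨅ a : A, c s a + lam * ∑ s', p s a s' * vstar s')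
    (vd : (S → A) → S → ℝ)
    (hvd : ∀ d : S → A,
      vd d = (((1 : Matrix S S ℝ) - lam • Matrix.of fun s₁ s₂ => p s₁ (d s₁) s₂)⁻¹).mulVec
        (fun s₁ => c s₁ (d s₁))) :
    ∃ dstar : S → A,
      (∀ (d : S → A) (s : S), vd dstar s ≤ vd d s) ∧
      (∀ s : S, vstar s = (⨅ d : S → A, vd d s) ∧ vstar s = vd dstar s) := by
  set P : (S → A) → Matrix S S ℝ := fun d => Matrix.of fun s₁ s₂ => p s₁ (d s₁) s₂
  set Q : S → A → ℝ := fun s a => c s a + lam * ∑ s', p s a s' * vstar s'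
  have hP : ∀ d, P d ∈ Matrix.rowStochastic ℝ S := fun d =>
    Matrix.mem_rowStochastic_iff_sum.2 ⟨fun s => hp0 s (d s), fun s => hp1 s (d s)⟩
  have hQ : ∀ d, (fun s => c s (d s)) + lam • (P d).mulVec vstar = fun s => Q s (d s) := by
    intro d
    funext s
    simp [P, Q, Matrix.mulVec, dotProduct]
  have hvstar_le : ∀ (d : S → A) s, vstar s ≤ Q s (d s) := fun d s =>
    (hfix s).trans_le (ciInf_le (Finite.bddBelow_range _) (d s))
  choose dstar hdstar using fun s => Finite.exists_min (Q s)
  have hgreedy : ∀ s, vstar s = Q s (dstar s) := fun s =>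
    le_antisymm (hvstar_le dstar s) ((le_ciInf (hdstar s)).trans_eq (hfix s).symm)
  have hopt : vd dstar = vstar := by
    rw [hvd, Matrix.inv_one_sub_smul_mulVec_eq_iff (hP dstar) hlam0.le hlam1, hQ]
    exact (funext hgreedy).symm
  have hle : ∀ d, vstar ≤ vd d := fun d => by
    rw [hvd]
    refine Matrix.le_inv_one_sub_smul_mulVec (hP d) hlam0.le hlam1 ?_
    rw [hQ]
    exact hvstar_le d
  refine ⟨dstar, fun d s => hopt ▸ hle d s, fun s => ⟨?_, congrFun hopt.symm s⟩⟩
  exact le_antisymm (le_ciInf fun d => hle d s)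
    (hopt ▸ ciInf_le (Finite.bddBelow_range _) dstar)

/-- There exists a decision rule `d*` whose policy value
`v_{d*} = (I - λ P_{d*})⁻¹ h_{d*}` attains the componentwise minimum of policy values
simultaneously at all states, and this componentwise minimum is the unique fixed point
`v*` of the Bellman operator. -/
theorem stmt_10 {S A : Type*} [Fintype S] [Nonempty S] [DecidableEq S]
    [Fintype A] [Nonempty A]
    (p : S → A → S → ℝ)
    (hp0 : ∀ s a s', 0 ≤ p s a s')
    (hp1 : ∀ s a, ∑ s', p s a s' = 1)
    (lam : ℝ) (hlam0 : 0 < lam) (hlam1 : lam < 1)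
    (c : S → A → ℝ)
    (vstar : S → ℝ)
    (hfix : ∀ s, vstar s = ⨅ a : A, c s a + lam * ∑ s', p s a s' * vstar s')
    (vd : (S → A) → S → ℝ)
    (hvd : ∀ d : S → A,
      vd d = (((1 : Matrix S S ℝ) - lam • Matrix.of fun s₁ s₂ => p s₁ (d s₁) s₂)⁻¹).mulVec
        (fun s₁ => c s₁ (d s₁))) :
    ∃ dstar : S → A,
      (∀ (d : S → A) (s : S), vd dstar s ≤ vd d s) ∧
      (∀ s : S, vstar s = (⨅ d : S → A, vd d s) ∧ vstar s = vd dstar s) :=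
  stmt_10_general p hp0 hp1 lam hlam0 hlam1 c vstar hfix vd hvd
end

section
/- Let S and A be nonempty finite sets, let p be a transition kernel, let λ ∈ (0,1), let c : S×A → ℝ, and for each decision rule d : S → A let v_d = (I − λP_d)^{-1} h_d. Let β ∈ ℝ^S satisfy β(s) > 0 for all s ∈ S. Then a decision rule d minimizes d' ↦ ∑_{s∈S} β(s) v_{d'}(s) over all decision rules if and only if v_d(s) = min_{d' : S → A} v_{d'}(s) for every s ∈ S. -/
open Matrix Finset

section helpers
variable {S : Type*} [Fintype S] [Nonempty S] [DecidableEq S]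

/-- If `(I - λP) u ≥ 0` componentwise for a row-stochastic nonneg `P` and `0 < λ < 1`,
then `u ≥ 0`. -/
lemma mulVec_expand {lam : ℝ} (P : Matrix S S ℝ) (u : S → ℝ) (s : S) :
    ((1 - lam • P).mulVec u) s = u s - lam * ∑ s', P s s' * u s' := by
  rw [Matrix.sub_mulVec, Matrix.smul_mulVec, Matrix.one_mulVec]
  simp only [Pi.sub_apply, Pi.smul_apply, smul_eq_mul, Matrix.mulVec, dotProduct]

lemma nonneg_of_sub_smul {lam : ℝ} (hlam0 : 0 < lam) (hlam1 : lam < 1)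
    (P : Matrix S S ℝ) (hP0 : ∀ s s', 0 ≤ P s s') (hP1 : ∀ s, ∑ s', P s s' = 1)
    (u : S → ℝ) (hu : ∀ s, 0 ≤ ((1 - lam • P).mulVec u) s) : ∀ s, 0 ≤ u s := by
  obtain ⟨s0, hs0⟩ := Finite.exists_min u
  have key : ∀ s, ((1 - lam • P).mulVec u) s = u s - lam * ∑ s', P s s' * u s' :=
    fun s => mulVec_expand P u s
  have h1 : u s0 ≤ ∑ s', P s0 s' * u s' := by
    calc u s0 = ∑ s', P s0 s' * u s0 := by rw [← Finset.sum_mul, hP1 s0, one_mul]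
    _ ≤ ∑ s', P s0 s' * u s' :=
      Finset.sum_le_sum fun s' _ => mul_le_mul_of_nonneg_left (hs0 s') (hP0 s0 s')
  have h2 := hu s0
  rw [key s0] at h2
  have h3 : 0 ≤ (1 - lam) * u s0 := by nlinarith
  have h4 : 0 ≤ u s0 := nonneg_of_mul_nonneg_right h3 (by linarith)
  exact fun s => le_trans h4 (hs0 s)

lemma isUnit_sub_smul {lam : ℝ} (hlam0 : 0 < lam) (hlam1 : lam < 1)
    (P : Matrix S S ℝ) (hP0 : ∀ s s', 0 ≤ P s s') (hP1 : ∀ s, ∑ s', P s s' = 1) :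
    IsUnit (1 - lam • P) := by
  rw [← Matrix.mulVec_injective_iff_isUnit]
  have h0 : ∀ x : S → ℝ, (1 - lam • P).mulVec x = 0 → x = 0 := by
    intro x hx
    have hpos := nonneg_of_sub_smul hlam0 hlam1 P hP0 hP1 x (fun s => by rw [hx]; simp)
    have hneg := nonneg_of_sub_smul hlam0 hlam1 P hP0 hP1 (-x)
      (fun s => by rw [Matrix.mulVec_neg, hx]; simp)
    funext s
    have := hneg s
    simp only [Pi.neg_apply, Pi.zero_apply] at this ⊢
    linarith [hpos s]
  intro x y hxy
  have : (1 - lam • P).mulVec (x - y) = 0 := by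
    rw [Matrix.mulVec_sub, hxy, sub_self]
  have := h0 _ this
  funext s
  have := congrFun this s
  simp only [Pi.sub_apply, Pi.zero_apply] at this
  linarith

end helpers

/-- For any strictly positive weight vector `β`, a decision rule `d`
minimizes `∑_s β(s) v_{d'}(s)` over decision rules `d'` if and only if `v_d` attains
the componentwise minimum of the policy values at every state. -/
theorem stmt_11 {S A : Type*} [Fintype S] [Nonempty S] [DecidableEq S]
    [Fintype A] [Nonempty A]
    (p : S → A → S → ℝ)
    (hp0 : ∀ s a s', 0 ≤ p s a s')
    (hp1 : ∀ s a, ∑ s', p s a s' = 1)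
    (lam : ℝ) (hlam0 : 0 < lam) (hlam1 : lam < 1)
    (c : S → A → ℝ)
    (vd : (S → A) → S → ℝ)
    (hvd : ∀ d : S → A,
      vd d = (((1 : Matrix S S ℝ) - lam • Matrix.of fun s₁ s₂ => p s₁ (d s₁) s₂)⁻¹).mulVec
        (fun s₁ => c s₁ (d s₁)))
    (beta : S → ℝ) (hbeta : ∀ s, 0 < beta s) :
    ∀ d : S → A,
      (∀ d' : S → A, ∑ s, beta s * vd d s ≤ ∑ s, beta s * vd d' s) ↔
        (∀ s, vd d s = ⨅ d' : S → A, vd d' s) := by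
  classical
  -- notation
  set M : (S → A) → Matrix S S ℝ :=
    fun d => (1 : Matrix S S ℝ) - lam • Matrix.of fun s₁ s₂ => p s₁ (d s₁) s₂ with hM
  have hP0 : ∀ d : S → A, ∀ s s', 0 ≤ (Matrix.of fun s₁ s₂ => p s₁ (d s₁) s₂ : Matrix S S ℝ) s s' :=
    fun d s s' => hp0 s (d s) s'
  have hP1 : ∀ d : S → A, ∀ s, ∑ s', (Matrix.of fun s₁ s₂ => p s₁ (d s₁) s₂ : Matrix S S ℝ) s s' = 1 :=
    fun d s => hp1 s (d s)
  have hMunit : ∀ d, IsUnit (M d) := fun d =>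
    isUnit_sub_smul hlam0 hlam1 _ (hP0 d) (hP1 d)
  -- fixed point equation
  have hfix : ∀ d : S → A, (M d).mulVec (vd d) = fun s₁ => c s₁ (d s₁) := by
    intro d
    rw [hvd d, Matrix.mulVec_mulVec, Matrix.mul_nonsing_inv _ ((Matrix.isUnit_iff_isUnit_det _).mp (hMunit d)), Matrix.one_mulVec]
  have hfix' : ∀ d : S → A, ∀ s, vd d s =
      c s (d s) + lam * ∑ s', p s (d s) s' * vd d s' := by
    intro d s
    have h := congrFun (hfix d) s
    rw [hM] at h
    rw [mulVec_expand] at h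
    simp only [Matrix.of_apply] at h
    linarith
  -- combination lemma
  have hcomb : ∀ d1 d2 : S → A, ∃ d3 : S → A,
      ∀ s, vd d3 s ≤ vd d1 s ∧ vd d3 s ≤ vd d2 s := by
    intro d1 d2
    set d3 : S → A := fun s => if vd d1 s ≤ vd d2 s then d1 s else d2 s with hd3
    refine ⟨d3, ?_⟩
    set m : S → ℝ := fun s => min (vd d1 s) (vd d2 s) with hm
    have hstep : ∀ s, 0 ≤ ((M d3).mulVec (m - vd d3)) s := by
      intro s
      have hv3 : ((M d3).mulVec (vd d3)) s = c s (d3 s) := congrFun (hfix d3) s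
      have hexp : ∀ u : S → ℝ, ((M d3).mulVec u) s
          = u s - lam * ∑ s', p s (d3 s) s' * u s' := by
        intro u
        rw [hM, mulVec_expand]
        simp only [Matrix.of_apply]
      rw [Matrix.mulVec_sub]
      simp only [Pi.sub_apply]
      rw [hv3, hexp m]
      -- goal: 0 ≤ m s - lam * ∑ p m - c s (d3 s)
      by_cases h : vd d1 s ≤ vd d2 s
      · have hms : m s = vd d1 s := min_eq_left h
        have hd3s : d3 s = d1 s := if_pos h
        have hsum : ∑ s', p s (d3 s) s' * m s' ≤ ∑ s', p s (d3 s) s' * vd d1 s' :=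
          Finset.sum_le_sum fun s' _ =>
            mul_le_mul_of_nonneg_left (min_le_left _ _) (hp0 s (d3 s) s')
        have := hfix' d1 s
        rw [hms, hd3s]
        rw [hd3s] at hsum
        nlinarith
      · have hms : m s = vd d2 s := min_eq_right (le_of_not_ge h)
        have hd3s : d3 s = d2 s := if_neg h
        have hsum : ∑ s', p s (d3 s) s' * m s' ≤ ∑ s', p s (d3 s) s' * vd d2 s' :=
          Finset.sum_le_sum fun s' _ =>
            mul_le_mul_of_nonneg_left (min_le_right _ _) (hp0 s (d3 s) s')
        have := hfix' d2 s
        rw [hms, hd3s]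
        rw [hd3s] at hsum
        nlinarith
    have hnn := nonneg_of_sub_smul hlam0 hlam1 _ (hP0 d3) (hP1 d3) (m - vd d3) hstep
    intro s
    have := hnn s
    simp only [Pi.sub_apply] at this
    constructor
    · have := le_of_sub_nonneg this
      exact le_trans this (min_le_left _ _)
    · have := le_of_sub_nonneg this
      exact le_trans this (min_le_right _ _)
  -- existence of a componentwise-optimal rule
  have hopt : ∃ dstar : S → A, ∀ d : S → A, ∀ s, vd dstar s ≤ vd d s := by
    have : ∀ F : Finset (S → A), ∃ d0 : S → A, ∀ d ∈ F, ∀ s, vd d0 s ≤ vd d s := by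
      intro F
      induction F using Finset.induction_on with
      | empty => exact ⟨Classical.arbitrary _, by simp⟩
      | @insert d F' hnotmem ih =>
        obtain ⟨d0, hd0⟩ := ih
        obtain ⟨d3, hd3⟩ := hcomb d0 d
        refine ⟨d3, ?_⟩
        intro d' hd' s
        rcases Finset.mem_insert.mp hd' with h | h
        · rw [h]; exact (hd3 s).2
        · exact le_trans (hd3 s).1 (hd0 d' h s)
    obtain ⟨d0, hd0⟩ := this Finset.univ
    exact ⟨d0, fun d s => hd0 d (Finset.mem_univ d) s⟩
  obtain ⟨dstar, hstar⟩ := hopt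
  have hinf : ∀ s, (⨅ d' : S → A, vd d' s) = vd dstar s := by
    intro s
    apply le_antisymm
    · exact ciInf_le (Finite.bddBelow_range _) dstar
    · exact le_ciInf fun d' => hstar d' s
  intro d
  constructor
  · intro hmin s
    have h1 := hmin dstar
    have h2 : ∀ s, vd dstar s ≤ vd d s := hstar d
    have h3 : ∀ s, vd d s = vd dstar s := by
      by_contra hc
      push_neg at hc
      obtain ⟨s0, hs0⟩ := hc
      have hlt : vd dstar s0 < vd d s0 := lt_of_le_of_ne (h2 s0) (Ne.symm hs0)
      have : ∑ s, beta s * vd dstar s < ∑ s, beta s * vd d s := by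
        apply Finset.sum_lt_sum
        · exact fun i _ => mul_le_mul_of_nonneg_left (h2 i) (le_of_lt (hbeta i))
        · exact ⟨s0, Finset.mem_univ s0, mul_lt_mul_of_pos_left hlt (hbeta s0)⟩
      linarith
    rw [hinf s, h3 s]
  · intro heq d'
    have : ∀ s, vd d s ≤ vd d' s := by
      intro s
      rw [heq s, hinf s]
      exact hstar d' s
    exact Finset.sum_le_sum fun s _ =>
      mul_le_mul_of_nonneg_left (this s) (le_of_lt (hbeta s))
end

section
/- Let S and A be nonempty finite sets, let p be a transition kernel, let λ ∈ (0,1), let c : S×A → ℝ, let v* be the unique fixed point of the Bellman operator T, and let α ∈ ℝ^S with α(s) > 0 for all s. Suppose v ∈ ℝ^S is primal feasible (v(s) ≤ c(s,a) + λ ∑_{s'∈S} p(s'|s,a) v(s') for all (s,a)), γ : S×A → ℝ is dual feasible (γ(s,a) ≥ 0 for all (s,a) and ∑_{a∈A} [γ(s,a) − λ ∑_{s'∈S} γ(s',a) p(s|s',a)] = α(s) for all s), and the complementary slackness conditions hold: γ(s,a) · (c(s,a) + λ ∑_{s'∈S} p(s'|s,a) v(s') − v(s)) = 0 for every (s,a)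 ∈ S×A. Then ∑_{s∈S} α(s) v(s) = ∑_{s∈S} ∑_{a∈A} γ(s,a) c(s,a), and v(s) = v*(s) for every s ∈ S. -/
/-- Complementary slackness certifies optimality in the LP formulation of
the discounted MDP: if `v` is primal feasible, `γ` is dual feasible (with strictly
positive initial distribution `α`), and complementary slackness holds, then the primal
and dual objective values coincide and `v` equals the unique fixed point `v*` of the
Bellman operator. -/
theorem stmt_15 {S A : Type*} [Fintype S] [Nonempty S]
    [Fintype A] [Nonempty A]
    (p : S → A → S → ℝ)
    (hp0 : ∀ s a s', 0 ≤ p s a s')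
    (hp1 : ∀ s a, ∑ s', p s a s' = 1)
    (lam : ℝ) (hlam0 : 0 < lam) (hlam1 : lam < 1)
    (c : S → A → ℝ)
    (vstar : S → ℝ)
    (hfix : ∀ s, vstar s = ⨅ a : A, c s a + lam * ∑ s', p s a s' * vstar s')
    (alpha : S → ℝ) (halpha : ∀ s, 0 < alpha s)
    (v : S → ℝ)
    (hprimal : ∀ s a, v s ≤ c s a + lam * ∑ s', p s a s' * v s')
    (gamma : S → A → ℝ)
    (hg0 : ∀ s a, 0 ≤ gamma s a)
    (hgfeas : ∀ s, ∑ a, (gamma s a - lam * ∑ s', gamma s' a * p s' a s) = alpha s)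
    (hcs : ∀ s a, gamma s a * (c s a + lam * (∑ s', p s a s' * v s') - v s) = 0) :
    (∑ s, alpha s * v s = ∑ s, ∑ a, gamma s a * c s a) ∧ ∀ s, v s = vstar s := by
  -- infimum attainment for finite nonempty A
  have hinf : ∀ (f : A → ℝ), ∃ a, (⨅ b, f b) = f a ∧ ∀ b, f a ≤ f b := by
    intro f
    obtain ⟨a, ha⟩ := Finite.exists_min f
    exact ⟨a, le_antisymm (ciInf_le (Set.finite_range f).bddBelow a) (le_ciInf ha), ha⟩
  constructor
  · -- equality of objective values
    have key : ∀ s a, gamma s a * c s a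
        = gamma s a * v s - lam * (gamma s a * ∑ s', p s a s' * v s') := by
      intro s a; linear_combination hcs s a
    have expand : ∀ (f g : S → A → ℝ),
        ∑ s, ∑ a, (f s a - lam * g s a)
          = (∑ s, ∑ a, f s a) - lam * ∑ s, ∑ a, g s a := by
      intro f g
      simp [Finset.sum_sub_distrib, Finset.mul_sum]
    have swap : ∑ s, ∑ a, ((∑ s', gamma s' a * p s' a s) * v s)
        = ∑ s, ∑ a, (gamma s a * ∑ s', p s a s' * v s') := by
      have L : ∑ s, ∑ a, ((∑ s', gamma s' a * p s' a s) * v s)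
          = ∑ x, ∑ y, ∑ a, gamma x a * p x a y * v y := by
        calc ∑ s, ∑ a, ((∑ s', gamma s' a * p s' a s) * v s)
            = ∑ s, ∑ a, ∑ s', gamma s' a * p s' a s * v s :=
              Finset.sum_congr rfl fun s _ => Finset.sum_congr rfl fun a _ =>
                Finset.sum_mul _ _ _
          _ = ∑ s, ∑ s', ∑ a, gamma s' a * p s' a s * v s :=
              Finset.sum_congr rfl fun s _ => Finset.sum_comm
          _ = ∑ x, ∑ y, ∑ a, gamma x a * p x a y * v y := Finset.sum_comm
      have R : ∑ s, ∑ a, (gamma s a * ∑ s', p s a s' * v s')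
          = ∑ x, ∑ y, ∑ a, gamma x a * (p x a y * v y) := by
        refine Finset.sum_congr rfl fun x _ => ?_
        rw [Finset.sum_comm]
        refine Finset.sum_congr rfl fun a _ => ?_
        rw [Finset.mul_sum]
      rw [L, R]
      exact Finset.sum_congr rfl fun x _ => Finset.sum_congr rfl fun y _ =>
        Finset.sum_congr rfl fun a _ => (mul_assoc _ _ _)
    calc ∑ s, alpha s * v s
        = ∑ s, ∑ a, (gamma s a - lam * ∑ s', gamma s' a * p s' a s) * v s := by
          refine Finset.sum_congr rfl fun s _ => ?_
          rw [← Finset.sum_mul, hgfeas s]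
      _ = ∑ s, ∑ a, (gamma s a * v s - lam * ((∑ s', gamma s' a * p s' a s) * v s)) := by
          refine Finset.sum_congr rfl fun s _ => Finset.sum_congr rfl fun a _ => by ring
      _ = (∑ s, ∑ a, gamma s a * v s)
            - lam * ∑ s, ∑ a, ((∑ s', gamma s' a * p s' a s) * v s) := expand _ _
      _ = (∑ s, ∑ a, gamma s a * v s)
            - lam * ∑ s, ∑ a, (gamma s a * ∑ s', p s a s' * v s') := by rw [swap]
      _ = ∑ s, ∑ a, (gamma s a * v s - lam * (gamma s a * ∑ s', p s a s' * v s')) :=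
          (expand _ _).symm
      _ = ∑ s, ∑ a, gamma s a * c s a := by
          refine Finset.sum_congr rfl fun s _ => Finset.sum_congr rfl fun a _ => ?_
          exact (key s a).symm
  · -- v is a fixed point of the Bellman operator
    have hTv : ∀ s, v s = ⨅ a : A, c s a + lam * ∑ s', p s a s' * v s' := by
      intro s
      refine le_antisymm (le_ciInf (hprimal s)) ?_
      have hsum : alpha s ≤ ∑ a, gamma s a := by
        rw [← hgfeas s]
        refine Finset.sum_le_sum fun a _ => ?_
        have h0 : 0 ≤ lam * ∑ s', gamma s' a * p s' a s :=
          mul_nonneg hlam0.le (Finset.sum_nonneg fun s' _ =>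
            mul_nonneg (hg0 s' a) (hp0 s' a s))
        linarith
      have hpos : ∃ a : A, 0 < gamma s a := by
        by_contra h
        push_neg at h
        have hz : ∑ a, gamma s a = 0 :=
          Finset.sum_eq_zero fun a _ => le_antisymm (h a) (hg0 s a)
        have := halpha s; linarith
      obtain ⟨a, ha⟩ := hpos
      have heq : c s a + lam * (∑ s', p s a s' * v s') - v s = 0 := by
        rcases mul_eq_zero.mp (hcs s a) with h | h
        · exact absurd h (ne_of_gt ha)
        · exact h
      calc (⨅ b : A, c s b + lam * ∑ s', p s b s' * v s')
          ≤ c s a + lam * ∑ s', p s a s' * v s' :=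
            ciInf_le (Set.finite_range _).bddBelow a
        _ = v s := by linarith
    -- contraction argument with an opaque maximum M
    obtain ⟨s0, hs0⟩ := Finite.exists_max (fun s => |v s - vstar s|)
    obtain ⟨M, hMeq, hsM⟩ : ∃ M, |v s0 - vstar s0| = M ∧ ∀ x, |v x - vstar x| ≤ M :=
      ⟨_, rfl, hs0⟩
    have hM0 : 0 ≤ M := hMeq ▸ abs_nonneg _
    set F : A → ℝ := fun a => c s0 a + lam * ∑ s', p s0 a s' * v s' with hF
    set G : A → ℝ := fun a => c s0 a + lam * ∑ s', p s0 a s' * vstar s' with hG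
    have hbound : ∀ a : A, |F a - G a| ≤ lam * M := by
      intro a
      have h1 : F a - G a = lam * ∑ s', p s0 a s' * (v s' - vstar s') := by
        have h2 : ∑ s', p s0 a s' * (v s' - vstar s')
            = (∑ s', p s0 a s' * v s') - ∑ s', p s0 a s' * vstar s' := by
          rw [← Finset.sum_sub_distrib]
          exact Finset.sum_congr rfl fun s' _ => mul_sub _ _ _
        simp only [hF, hG]
        linear_combination (-lam) * h2
      rw [h1, abs_mul, abs_of_pos hlam0]
      refine mul_le_mul_of_nonneg_left ?_ hlam0.le
      calc |∑ s', p s0 a s' * (v s' - vstar s')|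
          ≤ ∑ s', |p s0 a s' * (v s' - vstar s')| := Finset.abs_sum_le_sum_abs _ _
        _ ≤ ∑ s', p s0 a s' * M := by
            refine Finset.sum_le_sum fun s' _ => ?_
            rw [abs_mul, abs_of_nonneg (hp0 s0 a s')]
            exact mul_le_mul_of_nonneg_left (hsM s') (hp0 s0 a s')
        _ = M := by rw [← Finset.sum_mul, hp1, one_mul]
    have hMle : M ≤ lam * M := by
      conv_lhs => rw [← hMeq]
      rw [hTv s0, hfix s0]
      obtain ⟨aF, haF, haFmin⟩ := hinf F
      obtain ⟨aG, haG, haGmin⟩ := hinf G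
      rw [haF, haG, abs_le]
      have h2F := abs_le.mp (hbound aF)
      have h2G := abs_le.mp (hbound aG)
      have h1 : G aG ≤ G aF := haGmin aF
      have h1' : F aF ≤ F aG := haFmin aG
      constructor
      · linarith [h2F.1]
      · linarith [h2G.2]
    have hMz : M = 0 := by nlinarith
    intro s
    have h := hsM s
    rw [hMz] at h
    have h0 : |v s - vstar s| = 0 := le_antisymm h (abs_nonneg _)
    have := abs_eq_zero.mp h0
    linarith
end
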